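/- (Order of the Euler–Lagrange equations, mechanics.) Let k ≥ 1 and let s be an integer with k−1 ≤ s ≤ 2k−1, and let L : J^k → ℝ be a smooth Lagrangian. If every momentum function L^r_α (r = 1, …, k; α = 1, …, n) is π^(2k−1)_s-basic, then every Euler–Lagrange function L^0_α is π^(2k)_(s+1)-basic; that is, the Euler–Lagrange equations are of order at most s+1. -/

import Mathlib

noncomputable section

/-- The `j`-th order jet space `J^j = ℝ × (ℝ^n)^(j+1)` of curves in `ℝ^n`,
with coordinates `(t, q_0, …, q_j)`. -/
abbrev Jet (n j : ℕ) : Type := ℝ × (Fin (j + 1) → Fin n → ℝ)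

namespace Jet

variable {n : ℕ}

/-- The projection (truncation) `J^j → J^s` forgetting the coordinates `q_i` for `i > s`
(padding with `0` in the irrelevant case `s > j`). -/
def projTo {j : ℕ} (s : ℕ) (p : Jet n j) : Jet n s :=
  (p.1, fun i α => if h : (i : ℕ) < j + 1 then p.2 ⟨i, h⟩ α else 0)

/-- The coordinate function `q_i^α` (zero if out of range). -/
def coordq {j : ℕ} (i : ℕ) (α : Fin n) (p : Jet n j) : ℝ :=
  if h : i < j + 1 then p.2 ⟨i, h⟩ α else 0

/-- The tangent vector in the `t`-direction. -/
def vt {j : ℕ} : Jet n j := (1, 0)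

/-- The tangent vector in the `q_i^α`-direction (zero vector if `i` is out of range). -/
def vq {j : ℕ} (i : ℕ) (α : Fin n) : Jet n j :=
  (0, fun i' α' => if (i' : ℕ) = i ∧ α' = α then 1 else 0)

/-- The partial derivative `∂f/∂t`. -/
def pdt {j : ℕ} (f : Jet n j → ℝ) (p : Jet n j) : ℝ := fderiv ℝ f p vt

/-- The partial derivative `∂f/∂q_i^α`. -/
def pdq {j : ℕ} (i : ℕ) (α : Fin n) (f : Jet n j → ℝ) (p : Jet n j) : ℝ :=
  fderiv ℝ f p (vq i α)

/-- The total time derivative `D_t f : J^(j+1) → ℝ` of a function `f : J^j → ℝ`: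
`D_t f = ∂f/∂t + Σ_{i=0}^{j} Σ_α q_(i+1)^α ∂f/∂q_i^α`. -/
def Dt {j : ℕ} (f : Jet n j → ℝ) (p : Jet n (j + 1)) : ℝ :=
  pdt f (projTo j p) +
    ∑ i : Fin (j + 1), ∑ α : Fin n, p.2 i.succ α * pdq (i : ℕ) α f (projTo j p)

/-- The iterated total time derivative `D_t^i : C^∞(J^j) → C^∞(J^(j+i))`. -/
def DtIter {j : ℕ} : (i : ℕ) → (Jet n j → ℝ) → Jet n (j + i) → ℝ
  | 0, f => f
  | i + 1, f => Dt (DtIter i f)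

/-- `f : J^j → ℝ` is `π^j_s`-basic: it factors through the projection `J^j → J^s`. -/
def Basic {j : ℕ} (s : ℕ) (f : Jet n j → ℝ) : Prop :=
  ∃ g : Jet n s → ℝ, ∀ p, f p = g (projTo s p)

/-- The momentum function `L^r_α := Σ_{i=0}^{k−r} (−1)^i D_t^i(∂L/∂q_(r+i)^α)`
of a `k`-th order Lagrangian, regarded as a function on `J^(2k−1)`. -/
def mom (k : ℕ) (L : Jet n k → ℝ) (r : ℕ) (α : Fin n) (p : Jet n (2 * k - 1)) : ℝ :=
  ∑ i ∈ Finset.range (k - r + 1),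
    (-1 : ℝ) ^ i * DtIter i (pdq (r + i) α L) (projTo (k + i) p)

/-- The Euler–Lagrange function `L^0_α := ∂L/∂q_0^α − D_t L^1_α : J^(2k) → ℝ`. -/
def EL (k : ℕ) (L : Jet n k → ℝ) (α : Fin n) (p : Jet n (2 * k)) : ℝ :=
  pdq 0 α L (projTo k p) - Dt (mom k L 1 α) (projTo (2 * k - 1 + 1) p)

/-- The coordinate covector `dt` on `J^j`. -/
def dt (j : ℕ) : Jet n j →L[ℝ] ℝ := ContinuousLinearMap.fst ℝ ℝ (Fin (j + 1) → Fin n → ℝ)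

/-- The coordinate covector `dq_i^α` on `J^j` (zero if out of range). -/
def dq (j : ℕ) (i : ℕ) (α : Fin n) : Jet n j →L[ℝ] ℝ :=
  if h : i < j + 1 then
    (ContinuousLinearMap.proj α : (Fin n → ℝ) →L[ℝ] ℝ).comp
      (((ContinuousLinearMap.proj (⟨i, h⟩ : Fin (j + 1)) :
          (Fin (j + 1) → Fin n → ℝ) →L[ℝ] (Fin n → ℝ))).comp
        (ContinuousLinearMap.snd ℝ ℝ (Fin (j + 1) → Fin n → ℝ)))
  else 0

/-- The Poincaré–Cartan 1-form
`Θ_L = Σ_{r=1}^k Σ_α L^r_α dq_(r−1)^α + (L − Σ_{r=1}^k Σ_α L^r_α q_r^α) dt`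
of a `k`-th order Lagrangian, as a covector-valued map on `J^(2k−1)`. -/
def PC (k : ℕ) (L : Jet n k → ℝ) (p : Jet n (2 * k - 1)) : Jet n (2 * k - 1) →L[ℝ] ℝ :=
  (∑ r ∈ Finset.Icc 1 k, ∑ α : Fin n, mom k L r α p • dq (2 * k - 1) (r - 1) α) +
    (L (projTo k p) -
        ∑ r ∈ Finset.Icc 1 k, ∑ α : Fin n, mom k L r α p * coordq r α p) • dt (2 * k - 1)

/-- `dΘ_L(p)(u,v) := (DΘ_L(p)u)(v) − (DΘ_L(p)v)(u)`, where `D` is the Fréchet derivative. -/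
def dPC (k : ℕ) (L : Jet n k → ℝ) (p u v : Jet n (2 * k - 1)) : ℝ :=
  fderiv ℝ (PC k L) p u v - fderiv ℝ (PC k L) p v u

/-- The `j`-th prolongation `j^j c : ℝ → J^j` of a curve `c : ℝ → ℝ^n`. -/
def prol (j : ℕ) (c : ℝ → Fin n → ℝ) (t : ℝ) : Jet n j :=
  (t, fun i α => iteratedDeriv (i : ℕ) c t α)

end Jet

namespace Jet

variable {n : ℕ}

lemma projTo_self {s : ℕ} (p : Jet n s) : projTo s p = p := by
  unfold projTo
  refine Prod.ext rfl ?_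
  funext i α
  dsimp only
  rw [dif_pos i.isLt]

lemma projTo_projTo {J j s : ℕ} (h : s ≤ j) (p : Jet n J) :
    projTo s (projTo j p) = projTo s p := by
  unfold projTo
  refine Prod.ext rfl ?_
  funext i α
  have hi : (i : ℕ) < j + 1 := lt_of_lt_of_le i.isLt (by omega)
  dsimp only
  rw [dif_pos hi]

/-- `projTo` as a continuous linear map. -/
def projToL (n j s : ℕ) : Jet n j →L[ℝ] Jet n s :=
  LinearMap.toContinuousLinearMap
  { toFun := projTo s
    map_add' := by
      intro p q
      unfold projTo
      refine Prod.ext rfl ?_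
      funext i α
      by_cases h : (i : ℕ) ≤ j <;> simp [h]
    map_smul' := by
      intro c p
      unfold projTo
      refine Prod.ext rfl ?_
      funext i α
      by_cases h : (i : ℕ) ≤ j <;> simp [h] }

lemma projToL_apply {j s : ℕ} (p : Jet n j) : projToL n j s p = projTo s p := rfl

lemma projTo_vt {j s : ℕ} : projTo s (vt : Jet n j) = vt := by
  unfold projTo vt
  refine Prod.ext rfl ?_
  funext i α
  by_cases h : (i : ℕ) < j + 1 <;> simp [h]

lemma projTo_vq {j s : ℕ} (h : s ≤ j) (i : ℕ) (α : Fin n) :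
    projTo s (vq i α : Jet n j) = vq i α := by
  unfold projTo vq
  refine Prod.ext rfl ?_
  funext i' α'
  dsimp only
  rw [dif_pos (lt_of_lt_of_le i'.isLt (by omega))]

lemma vq_eq_zero {s i : ℕ} (h : s < i) (α : Fin n) : (vq i α : Jet n s) = 0 := by
  unfold vq
  refine Prod.ext rfl ?_
  funext i' α'
  have hne : ¬((i' : ℕ) = i ∧ α' = α) := by
    rintro ⟨h1, -⟩; have := i'.isLt; omega
  simp [hne]

lemma coordq_eq_snd {j : ℕ} (p : Jet n j) (i : Fin (j + 1)) (α : Fin n) :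
    coordq (i : ℕ) α p = p.2 i α := by
  unfold coordq
  rw [dif_pos i.isLt]

lemma fderiv_comp_projTo {j s : ℕ} (g : Jet n s → ℝ) (hg : Differentiable ℝ g)
    (p v : Jet n j) :
    fderiv ℝ (fun q : Jet n j => g (projTo s q)) p v =
      fderiv ℝ g (projTo s p) (projTo s v) := by
  have h1 : (fun q : Jet n j => g (projTo s q)) = g ∘ (projToL n j s) := rfl
  rw [h1, fderiv_comp p (hg _) (projToL n j s).differentiableAt,
    (projToL n j s).fderiv]
  rfl

lemma pdt_comp_projTo {j s : ℕ} (g : Jet n s → ℝ) (hg : Differentiable ℝ g)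
    (p : Jet n j) :
    pdt (fun q : Jet n j => g (projTo s q)) p = pdt g (projTo s p) := by
  unfold pdt
  rw [fderiv_comp_projTo g hg, projTo_vt]

lemma pdq_comp_projTo {j s : ℕ} (h : s ≤ j) (i : ℕ) (α : Fin n)
    (g : Jet n s → ℝ) (hg : Differentiable ℝ g) (p : Jet n j) :
    pdq i α (fun q : Jet n j => g (projTo s q)) p = pdq i α g (projTo s p) := by
  unfold pdq
  rw [fderiv_comp_projTo g hg, projTo_vq h]

lemma pdq_eq_zero {s i : ℕ} (h : s < i) (α : Fin n) (g : Jet n s → ℝ) (x : Jet n s) :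
    pdq i α g x = 0 := by
  unfold pdq
  rw [vq_eq_zero h, map_zero]

/-- Key lemma: the total derivative of a differentiable `π_s`-basic function is
`π_(s+1)`-basic. -/
lemma basic_Dt {j s : ℕ} (hs : s ≤ j) {f : Jet n j → ℝ}
    (hf : Differentiable ℝ f) (hb : Basic s f) : Basic (s + 1) (Dt f) := by
  obtain ⟨g₀, hg₀⟩ := hb
  set g : Jet n s → ℝ := fun y => f (projTo j y) with hgdef
  have hgd : Differentiable ℝ g := hf.comp (projToL n s j).differentiable
  have hg : ∀ p : Jet n j, f p = g (projTo s p) := by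
    intro p
    rw [hgdef]
    simp only
    rw [hg₀, hg₀, projTo_projTo hs, projTo_self]
  have hfg : f = fun q => g (projTo s q) := funext hg
  refine ⟨Dt g, ?_⟩
  intro p
  rw [hfg]
  unfold Dt
  rw [pdt_comp_projTo g hgd, projTo_projTo hs p, projTo_projTo (Nat.le_succ s) p]
  congr 1
  set F : ℕ → ℝ := fun m => ∑ α : Fin n, coordq (m + 1) α p * pdq m α g (projTo s p)
    with hF
  have hL : (∑ i : Fin (j + 1), ∑ α : Fin n,
      p.2 i.succ α * pdq (i : ℕ) α (fun q => g (projTo s q)) (projTo j p)) =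
      ∑ m ∈ Finset.range (j + 1), F m := by
    rw [← Fin.sum_univ_eq_sum_range]
    refine Finset.sum_congr rfl fun i _ => ?_
    rw [hF]
    refine Finset.sum_congr rfl fun α _ => ?_
    rw [pdq_comp_projTo hs _ α g hgd, projTo_projTo hs]
    congr 1
    rw [← Fin.val_succ]
    exact (coordq_eq_snd p i.succ α).symm
  have hR : (∑ i : Fin (s + 1), ∑ α : Fin n,
      (projTo (s + 1) p).2 i.succ α * pdq (i : ℕ) α g (projTo s p)) =
      ∑ m ∈ Finset.range (s + 1), F m := by
    rw [← Fin.sum_univ_eq_sum_range]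
    refine Finset.sum_congr rfl fun i _ => ?_
    rw [hF]
    refine Finset.sum_congr rfl fun α _ => ?_
    have h1 : (projTo (s + 1) p).2 i.succ α = coordq ((i : ℕ) + 1) α p := by
      rw [← Fin.val_succ]; rfl
    rw [h1]
  rw [hL, hR]
  refine (Finset.sum_subset (Finset.range_subset_range.mpr (by omega)) ?_).symm
  intro m _ hm
  have hsm : s < m := by
    simp only [Finset.mem_range, not_lt] at hm; omega
  rw [hF]
  simp [pdq_eq_zero hsm]

lemma contDiff_coord {m : ℕ} (i : Fin (m + 1)) (α : Fin n) :
    ContDiff ℝ (⊤ : ℕ∞) (fun p : Jet n m => p.2 i α) :=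
  contDiff_pi.mp (contDiff_pi.mp contDiff_snd i) α

lemma contDiff_pdq {j : ℕ} (i : ℕ) (α : Fin n) {f : Jet n j → ℝ}
    (hf : ContDiff ℝ (⊤ : ℕ∞) f) : ContDiff ℝ (⊤ : ℕ∞) (pdq i α f) := by
  unfold pdq
  exact (hf.fderiv_right (by simp)).clm_apply contDiff_const

lemma contDiff_pdt {j : ℕ} {f : Jet n j → ℝ}
    (hf : ContDiff ℝ (⊤ : ℕ∞) f) : ContDiff ℝ (⊤ : ℕ∞) (pdt f) := by
  unfold pdt
  exact (hf.fderiv_right (by simp)).clm_apply contDiff_const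

lemma contDiff_Dt {j : ℕ} {f : Jet n j → ℝ} (hf : ContDiff ℝ (⊤ : ℕ∞) f) :
    ContDiff ℝ (⊤ : ℕ∞) (Dt f) := by
  unfold Dt
  apply ContDiff.add
  · exact (contDiff_pdt hf).comp (projToL n (j + 1) j).contDiff
  · apply ContDiff.sum; intro i _
    apply ContDiff.sum; intro α _
    exact (contDiff_coord i.succ α).mul
      ((contDiff_pdq _ α hf).comp (projToL n (j + 1) j).contDiff)

lemma contDiff_DtIter {j : ℕ} (i : ℕ) {f : Jet n j → ℝ}
    (hf : ContDiff ℝ (⊤ : ℕ∞) f) : ContDiff ℝ (⊤ : ℕ∞) (DtIter i f) := by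
  induction i with
  | zero => exact hf
  | succ i ih => exact contDiff_Dt ih

lemma contDiff_mom (k r : ℕ) (α : Fin n) {L : Jet n k → ℝ}
    (hL : ContDiff ℝ (⊤ : ℕ∞) L) : ContDiff ℝ (⊤ : ℕ∞) (mom k L r α) := by
  unfold mom
  apply ContDiff.sum; intro i _
  exact contDiff_const.mul
    ((contDiff_DtIter i (contDiff_pdq _ α hL)).comp (projToL n (2 * k - 1) (k + i)).contDiff)

end Jet

/-- Order of the Euler–Lagrange equations, mechanics.
If every momentum `L^r_α` is `π^(2k−1)_s`-basic, then every Euler–Lagrange function `L^0_α`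
is `π^(2k)_(s+1)`-basic; that is, the Euler–Lagrange equations are of order at most `s+1`. -/
theorem stmt3 {n : ℕ} (hn : 1 ≤ n) (k s : ℕ) (hk : 1 ≤ k)
    (hs1 : k - 1 ≤ s) (hs2 : s ≤ 2 * k - 1)
    (L : Jet n k → ℝ) (hL : ContDiff ℝ (⊤ : ℕ∞) L)
    (hbasic : ∀ r ∈ Finset.Icc 1 k, ∀ α : Fin n, Jet.Basic s (Jet.mom k L r α)) :
    ∀ α : Fin n, Jet.Basic (s + 1) (Jet.EL k L α) := by
  intro α
  have hmom : Differentiable ℝ (Jet.mom k L 1 α) :=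
    (Jet.contDiff_mom k 1 α hL).differentiable (by simp)
  have hb : Jet.Basic s (Jet.mom k L 1 α) :=
    hbasic 1 (Finset.mem_Icc.mpr ⟨le_refl 1, hk⟩) α
  obtain ⟨G, hG⟩ := Jet.basic_Dt hs2 hmom hb
  refine ⟨fun y => Jet.pdq 0 α L (Jet.projTo k y) - G y, ?_⟩
  intro p
  unfold Jet.EL
  rw [hG]
  simp only
  rw [Jet.projTo_projTo (by omega : s + 1 ≤ 2 * k - 1 + 1) p,
      ← Jet.projTo_projTo (by omega : k ≤ s + 1) p]
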